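/- Suppose N ≥ 2, the propagation matrix A is irreducible (i.e., for all indices j, k there exists an integer m ≥ 1 such that the (j,k) entry of A^m is strictly positive), and λ_j > 0 for at least one user j. Then the spectral radius of the propagation matrix satisfies ρ(A) < 1. -/

import Mathlib

open Matrix Finset Filter

/-- Spectral radius of a real square matrix: the maximum of `|z|` over the
complex eigenvalues `z` (roots of the characteristic polynomial over `ℂ`). -/
noncomputable def specRad (N : ℕ) (T : Matrix (Fin N) (Fin N) ℝ) : ℝ :=
  sSup {r : ℝ | ∃ z : ℂ, ((T.map Complex.ofReal).charpoly).IsRoot z ∧ r = ‖z‖}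

/-- The propagation matrix `A`. -/
noncomputable def propA (N : ℕ) (L : Fin N → Finset (Fin N)) (lam mu : Fin N → ℝ) :
    Matrix (Fin N) (Fin N) ℝ :=
  Matrix.of fun j k => if k ∈ L j then mu k / (∑ l ∈ L j, (lam l + mu l)) else 0

/-- The vector `b_i`. -/
noncomputable def bvec (N : ℕ) (L : Fin N → Finset (Fin N)) (lam mu : Fin N → ℝ)
    (i : Fin N) : Fin N → ℝ :=
  fun j => if i ∈ L j then lam i / (∑ l ∈ L j, (lam l + mu l)) else 0

/-- The diagonal matrix `C`. -/
noncomputable def Cmat (N : ℕ) (lam mu : Fin N → ℝ) : Matrix (Fin N) (Fin N) ℝ :=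
  Matrix.diagonal fun j => mu j / (lam j + mu j)

/-- The vector `d_i`. -/
noncomputable def dvec (N : ℕ) (lam mu : Fin N → ℝ) (i : Fin N) : Fin N → ℝ :=
  fun j => if j = i then lam i / (lam i + mu i) else 0

/-
`A` is entrywise nonnegative with row sums at most `1`, and the row of any user `p` following a
user `j` with `λ_j > 0` sums to strictly less than `1`; such a `p` exists because `j` reaches
itself. Since every user reaches `p`, some power `A ^ K` has all row sums below `1`, i.e.
`‖A ^ K‖_∞ < 1`, and every eigenvalue `z` of `A` satisfies `|z| ^ K ≤ ‖A ^ K‖_∞ < 1`.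
-/

namespace Matrix

variable {n : Type*} [Fintype n]

lemma mulVec_mono_of_nonneg {A : Matrix n n ℝ} (hA : ∀ i j, 0 ≤ A i j) {v w : n → ℝ}
    (hvw : v ≤ w) : A *ᵥ v ≤ A *ᵥ w :=
  fun i => Finset.sum_le_sum fun j _ => mul_le_mul_of_nonneg_left (hvw j) (hA i j)

variable [DecidableEq n]

section Substochastic

variable {A : Matrix n n ℝ}

lemma antitone_pow_mulVec_one (hA : ∀ i j, 0 ≤ A i j) (hrow : A *ᵥ 1 ≤ 1) :
    Antitone fun k : ℕ => A ^ k *ᵥ 1 :=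
  antitone_nat_of_succ_le fun k => by
    rw [pow_succ, ← mulVec_mulVec]
    exact mulVec_mono_of_nonneg (pow_apply_nonneg hA k) hrow

lemma pow_mulVec_one_le_one (hA : ∀ i j, 0 ≤ A i j) (hrow : A *ᵥ 1 ≤ 1) (k : ℕ) :
    A ^ k *ᵥ 1 ≤ 1 := by
  simpa using antitone_pow_mulVec_one hA hrow (Nat.zero_le k)

lemma exists_apply_pos_of_pow_apply_pos (hA : ∀ i j, 0 ≤ A i j) {k : ℕ} (hk : k ≠ 0)
    {i j : n} (h : 0 < (A ^ k) i j) : ∃ q, 0 < A q j := by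
  obtain ⟨k, rfl⟩ := Nat.exists_eq_succ_of_ne_zero hk
  rw [pow_succ, mul_apply] at h
  obtain ⟨q, -, hq⟩ := (Finset.sum_pos_iff_of_nonneg fun q _ =>
    mul_nonneg (pow_apply_nonneg hA k i q) (hA q j)).1 h
  exact ⟨q, pos_of_mul_pos_right hq (pow_apply_nonneg hA k i q)⟩

lemma pow_succ_mulVec_one_lt_one (hA : ∀ i j, 0 ≤ A i j) (hrow : A *ᵥ 1 ≤ 1) {p : n}
    (hp : (A *ᵥ 1) p < 1) {k : ℕ} {i : n} (hk : 0 < (A ^ k) i p) :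
    (A ^ (k + 1) *ᵥ 1) i < 1 := by
  have hAk := pow_apply_nonneg hA k i
  calc (A ^ (k + 1) *ᵥ 1) i = ∑ q, (A ^ k) i q * (A *ᵥ 1) q := by
        rw [pow_succ, ← mulVec_mulVec]; rfl
    _ < ∑ q, (A ^ k) i q * 1 :=
        Finset.sum_lt_sum (fun q _ => mul_le_mul_of_nonneg_left (hrow q) (hAk q))
          ⟨p, Finset.mem_univ p, mul_lt_mul_of_pos_left hp hk⟩
    _ = (A ^ k *ᵥ 1) i := rfl
    _ ≤ 1 := pow_mulVec_one_le_one hA hrow k i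

lemma exists_pow_mulVec_one_lt_one (hA : ∀ i j, 0 ≤ A i j) (hrow : A *ᵥ 1 ≤ 1) {p : n}
    (hp : (A *ᵥ 1) p < 1) (hreach : ∀ i, ∃ k, 0 < (A ^ k) i p) :
    ∃ K, ∀ i, (A ^ K *ᵥ 1) i < 1 := by
  choose k hk using hreach
  refine ⟨Finset.univ.sup fun i => k i + 1, fun i => ?_⟩
  have hle : k i + 1 ≤ Finset.univ.sup fun i => k i + 1 :=
    Finset.le_sup (f := fun i => k i + 1) (Finset.mem_univ i)
  exact (antitone_pow_mulVec_one hA hrow hle i).trans_lt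
    (pow_succ_mulVec_one_lt_one hA hrow hp (hk i))

end Substochastic

section LinftyOpNorm

attribute [local instance] Matrix.linftyOpNormedRing Matrix.linftyOpNormedAlgebra

theorem norm_lt_one_of_isRoot_charpoly {B : Matrix n n ℂ} {k : ℕ}
    (hB : ∀ i, ∑ j, ‖(B ^ k) i j‖ < 1) {z : ℂ} (hz : B.charpoly.IsRoot z) : ‖z‖ < 1 := by
  have : Nonempty n := by
    by_contra h
    rw [not_nonempty_iff] at h
    simp [charpoly_isEmpty] at hz
  have hnorm : ‖B ^ k‖ < 1 := by
    rw [linfty_opNorm_def, ← NNReal.coe_one, NNReal.coe_lt_coe, Finset.sup_lt_iff zero_lt_one]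
    exact fun i _ => by rw [← NNReal.coe_lt_coe]; simpa using hB i
  have hzk : z ^ k ∈ spectrum ℂ (B ^ k) :=
    spectrum.pow_mem_pow B k (mem_spectrum_of_isRoot_charpoly hz)
  refine lt_of_pow_lt_pow_left₀ k zero_le_one ?_
  calc ‖z‖ ^ k = ‖z ^ k‖ := (norm_pow z k).symm
    _ ≤ ‖B ^ k‖ := spectrum.norm_le_norm_of_mem hzk
    _ < 1 ^ k := by rwa [one_pow]

end LinftyOpNorm

lemma norm_lt_one_of_isRoot_charpoly_map_ofReal {A : Matrix n n ℝ} (hA : ∀ i j, 0 ≤ A i j)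
    {k : ℕ} (hk : ∀ i, (A ^ k *ᵥ 1) i < 1) {z : ℂ}
    (hz : (A.map Complex.ofReal).charpoly.IsRoot z) : ‖z‖ < 1 := by
  refine norm_lt_one_of_isRoot_charpoly (k := k) (fun i => ?_) hz
  have hmap : (A.map Complex.ofReal) ^ k = (A ^ k).map Complex.ofReal :=
    (map_pow Complex.ofRealHom.mapMatrix A k).symm
  rw [hmap]
  simpa [abs_of_nonneg (pow_apply_nonneg hA k i _), mulVec, dotProduct] using hk i

end Matrix

lemma specRad_lt_one {N : ℕ} {T : Matrix (Fin N) (Fin N) ℝ}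
    (hT : ∀ z : ℂ, (T.map Complex.ofReal).charpoly.IsRoot z → ‖z‖ < 1) :
    specRad N T < 1 := by
  have hfin : {z : ℂ | (T.map Complex.ofReal).charpoly.IsRoot z}.Finite :=
    Polynomial.finite_setOfPred_isRoot (charpoly_monic _).ne_zero
  have hset : {r : ℝ | ∃ z : ℂ, (T.map Complex.ofReal).charpoly.IsRoot z ∧ r = ‖z‖} =
      (‖·‖) '' {z : ℂ | (T.map Complex.ofReal).charpoly.IsRoot z} := by
    ext r; simp [eq_comm]
  rw [specRad, hset]
  rcases Set.eq_empty_or_nonempty {z : ℂ | (T.map Complex.ofReal).charpoly.IsRoot z} with h | h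
  · rw [h, Set.image_empty, Real.sSup_empty]
    exact one_pos
  · rw [(hfin.image _).csSup_lt_iff (h.image _)]
    rintro _ ⟨z, hz, rfl⟩
    exact hT z hz

section Propagation

variable {N : ℕ} {L : Fin N → Finset (Fin N)} {lam mu : Fin N → ℝ}

lemma propA_nonneg (hlam : ∀ n, 0 ≤ lam n) (hmu : ∀ n, 0 ≤ mu n) (j k : Fin N) :
    0 ≤ propA N L lam mu j k := by
  rw [propA, of_apply]
  split_ifs
  · exact div_nonneg (hmu k) (sum_nonneg fun l _ => add_nonneg (hlam l) (hmu l))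
  · rfl

lemma propA_mulVec_one :
    propA N L lam mu *ᵥ 1 = fun j => (∑ k ∈ L j, mu k) / ∑ l ∈ L j, (lam l + mu l) := by
  ext j
  simp [propA, mulVec, dotProduct, sum_ite_mem, sum_div]

lemma propA_mulVec_one_le_one (hlam : ∀ n, 0 ≤ lam n) (hmu : ∀ n, 0 ≤ mu n) :
    propA N L lam mu *ᵥ 1 ≤ 1 := fun j => by
  rw [propA_mulVec_one]
  exact div_le_one_of_le₀ (sum_le_sum fun l _ => le_add_of_nonneg_left (hlam l))
    (sum_nonneg fun l _ => add_nonneg (hlam l) (hmu l))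

lemma propA_mulVec_one_lt_one (hlam : ∀ n, 0 ≤ lam n) (hmu : ∀ n, 0 ≤ mu n) {p j : Fin N}
    (hpj : 0 < propA N L lam mu p j) (hj : 0 < lam j) : (propA N L lam mu *ᵥ 1) p < 1 := by
  have hjp : j ∈ L p := by
    by_contra h
    simp [propA, h] at hpj
  have hlt : ∑ k ∈ L p, mu k < ∑ l ∈ L p, (lam l + mu l) :=
    sum_lt_sum (fun l _ => le_add_of_nonneg_left (hlam l)) ⟨j, hjp, lt_add_of_pos_left _ hj⟩
  rw [propA_mulVec_one]
  exact (div_lt_one ((sum_nonneg fun k _ => hmu k).trans_lt hlt)).2 hlt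

end Propagation

theorem stmt4_general (N : ℕ) (L : Fin N → Finset (Fin N))
    (lam mu : Fin N → ℝ)
    (hlam : ∀ n, 0 ≤ lam n) (hmu : ∀ n, 0 ≤ mu n)
    (hirr : ∀ j k, ∃ m : ℕ, 1 ≤ m ∧ 0 < (propA N L lam mu ^ m) j k)
    (hlamj : ∃ j, 0 < lam j) :
    specRad N (propA N L lam mu) < 1 := by
  set A := propA N L lam mu
  have hA : ∀ i j, 0 ≤ A i j := propA_nonneg hlam hmu
  have hrow : A *ᵥ 1 ≤ 1 := propA_mulVec_one_le_one hlam hmu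
  obtain ⟨j, hj⟩ := hlamj
  obtain ⟨m, hm, hjj⟩ := hirr j j
  obtain ⟨p, hpj⟩ := exists_apply_pos_of_pow_apply_pos hA (by omega) hjj
  obtain ⟨K, hK⟩ := exists_pow_mulVec_one_lt_one hA hrow
    (propA_mulVec_one_lt_one hlam hmu hpj hj) fun i => (hirr i p).imp fun _ => And.right
  exact specRad_lt_one fun z => norm_lt_one_of_isRoot_charpoly_map_ofReal hA hK

/-- if `N ≥ 2`, `A` is irreducible, and `λ_j > 0` for at least one
user `j`, then `ρ(A) < 1`. -/
theorem stmt4 (N : ℕ) (hN : 2 ≤ N) (L : Fin N → Finset (Fin N))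
    (hL : ∀ j, (L j).Nonempty) (lam mu : Fin N → ℝ)
    (hlam : ∀ n, 0 ≤ lam n) (hmu : ∀ n, 0 ≤ mu n)
    (hpos : ∀ n, 0 < lam n + mu n)
    (hirr : ∀ j k, ∃ m : ℕ, 1 ≤ m ∧ 0 < (propA N L lam mu ^ m) j k)
    (hlamj : ∃ j, 0 < lam j) :
    specRad N (propA N L lam mu) < 1 :=
  stmt4_general N L lam mu hlam hmu hirr hlamj
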